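/- arXiv:2110.09181 — 12 statements merged into one kernel-verified Lean document; each statement's English description precedes it below -/
import Mathlib

section
/- Let K be a semiring, let Q and R be finite types, and suppose the K-automaton (I, E, T) of dimension Q is conjugate to the K-automaton (J, F, U) of dimension R by a transfer matrix X : Matrix Q R K (that is, I · X = J, E · X = X · F, and T = X · U). Then for every natural number n one has I · Eⁿ · T = J · Fⁿ · U; in particular the two automata have the same n-step behaviour for every n (Proposition: conjugate automata are equivalent). -/
/-- Conjugate `K`-automata have the same `n`-step behaviour for every `n`:
if `I · X = J`, `E · X = X · F`, `T = X · U`, then `I · Eⁿ · T = J · Fⁿ · U`. -/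
theorem conjugate_automata_equivalent
    {K : Type*} [Semiring K] {Q R : Type*}
    [Fintype Q] [Fintype R] [DecidableEq Q] [DecidableEq R]
    (I : Matrix Unit Q K) (E : Matrix Q Q K) (T : Matrix Q Unit K)
    (J : Matrix Unit R K) (F : Matrix R R K) (U : Matrix R Unit K)
    (X : Matrix Q R K)
    (hI : I * X = J) (hE : E * X = X * F) (hT : T = X * U) :
    ∀ n : ℕ, I * E ^ n * T = J * F ^ n * U := by
  have key : ∀ n : ℕ, E ^ n * X = X * F ^ n := by
    intro n
    induction n with
    | zero => simp
    | succ n ih =>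
      rw [pow_succ, pow_succ, Matrix.mul_assoc (E ^ n) E X, hE, ← Matrix.mul_assoc, ih, Matrix.mul_assoc]
  intro n
  rw [hT, ← hI, ← Matrix.mul_assoc, Matrix.mul_assoc I (E ^ n) X, key, ← Matrix.mul_assoc]
end

section
/- For every regular expression E over α, the number of derived terms of E is at most the literal length of E: (DT(E)).card ≤ ℓ(E). -/
open RegularExpression

open scoped Classical in
/-- The finite set of *derived terms* of a regular expression. -/
noncomputable def derivedTerms {α : Type*} :
    RegularExpression α → Finset (RegularExpression α)
  | zero => ∅
  | epsilon => ∅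
  | char _ => {1}
  | plus P Q => derivedTerms P ∪ derivedTerms Q
  | comp P Q => (derivedTerms P).image (fun K => K * Q) ∪ derivedTerms Q
  | RegularExpression.star P => (derivedTerms P).image (fun K => K * RegularExpression.star P)

/-- The *literal length* of a regular expression: the number of occurrences
of letters of the alphabet in it. -/
def litLength {α : Type*} : RegularExpression α → ℕ
  | zero => 0
  | epsilon => 0
  | char _ => 1
  | plus P Q => litLength P + litLength Q
  | comp P Q => litLength P + litLength Q
  | RegularExpression.star P => litLength P

open scoped Classical in
/-- The finite set of *Antimirov partial derivatives* of a regular expression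
with respect to a letter `a`. -/
noncomputable def aderiv {α : Type*} (a : α) :
    RegularExpression α → Finset (RegularExpression α)
  | zero => ∅
  | epsilon => ∅
  | char b => if b = a then {1} else ∅
  | plus P Q => aderiv a P ∪ aderiv a Q
  | comp P Q =>
      if [] ∈ P.matches' then (aderiv a P).image (fun K => K * Q) ∪ aderiv a Q
      else (aderiv a P).image (fun K => K * Q)
  | RegularExpression.star P => (aderiv a P).image (fun K => K * RegularExpression.star P)

/-- The number of derived terms of a regular expression is at most its
literal length. -/
theorem card_derivedTerms_le_litLength {α : Type*} [DecidableEq α]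
    (E : RegularExpression α) :
    (derivedTerms E).card ≤ litLength E := by
  classical
  induction E with
  | zero => simp [derivedTerms, litLength]
  | epsilon => simp [derivedTerms, litLength]
  | char a => simp [derivedTerms, litLength]
  | plus P Q hP hQ =>
      calc (derivedTerms (P + Q)).card ≤ (derivedTerms P).card + (derivedTerms Q).card :=
            Finset.card_union_le _ _
        _ ≤ litLength P + litLength Q := Nat.add_le_add hP hQ
  | comp P Q hP hQ =>
      calc (derivedTerms (comp P Q)).card
          ≤ ((derivedTerms P).image (fun K => K * Q)).card + (derivedTerms Q).card :=
            Finset.card_union_le _ _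
        _ ≤ (derivedTerms P).card + (derivedTerms Q).card :=
            Nat.add_le_add_right (Finset.card_image_le) _
        _ ≤ litLength P + litLength Q := Nat.add_le_add hP hQ
  | star P hP =>
      calc (derivedTerms (RegularExpression.star P)).card
          ≤ (derivedTerms P).card := Finset.card_image_le
        _ ≤ litLength P := hP
end

section
/- The set of derived terms is closed under taking derived terms: for all regular expressions E and K over α, if K ∈ DT(E) then DT(K) ⊆ DT(E). -/
open RegularExpression

/-- The set of derived terms is closed under taking derived terms:
if `K ∈ DT(E)` then `DT(K) ⊆ DT(E)`. -/
theorem derivedTerms_subset_of_mem {α : Type*} [DecidableEq α]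
    (E K : RegularExpression α) (hK : K ∈ derivedTerms E) :
    derivedTerms K ⊆ derivedTerms E := by
  classical
  induction E generalizing K with
  | zero => simp [derivedTerms] at hK
  | epsilon => simp [derivedTerms] at hK
  | char a =>
      simp only [derivedTerms, Finset.mem_singleton] at hK
      subst hK
      simp [derivedTerms]
  | plus P Q ihP ihQ =>
      simp only [derivedTerms, Finset.mem_union] at hK ⊢
      rcases hK with h | h
      · exact fun x hx => Finset.mem_union_left _ (ihP K h hx)
      · exact fun x hx => Finset.mem_union_right _ (ihQ K h hx)
  | comp P Q ihP ihQ =>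
      simp only [derivedTerms, Finset.mem_union, Finset.mem_image] at hK
      rcases hK with ⟨J, hJ, rfl⟩ | h
      · intro x hx
        simp only [derivedTerms, Finset.mem_union, Finset.mem_image] at hx ⊢
        rcases hx with ⟨L, hL, rfl⟩ | h
        · exact Or.inl ⟨L, ihP J hJ hL, rfl⟩
        · exact Or.inr h
      · intro x hx
        simp only [derivedTerms, Finset.mem_union]
        exact Or.inr (ihQ K h hx)
  | star P ihP =>
      simp only [derivedTerms, Finset.mem_image] at hK
      rcases hK with ⟨J, hJ, rfl⟩
      intro x hx
      simp only [derivedTerms, Finset.mem_union, Finset.mem_image] at hx ⊢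
      rcases hx with ⟨L, hL, rfl⟩ | ⟨L, hL, rfl⟩
      · exact ⟨L, ihP J hJ hL, rfl⟩
      · exact ⟨L, hL, rfl⟩
end

section
/- For all regular expressions F and H over α, if H ∈ DT(F) then DT(H · F*) ⊆ DT(F*). -/
open RegularExpression

theorem mul_eq_comp' {α : Type*} (P Q : RegularExpression α) : P * Q = P.comp Q := rfl

theorem derivedTerms_trans {α : Type*} {F H : RegularExpression α}
    (hH : H ∈ derivedTerms F) : derivedTerms H ⊆ derivedTerms F := by
  classical
  induction F generalizing H with
  | zero => simp [derivedTerms] at hH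
  | epsilon => simp [derivedTerms] at hH
  | char a =>
    simp [derivedTerms] at hH
    subst hH
    simp [derivedTerms, RegularExpression.one_def]
  | plus P Q ihP ihQ =>
    simp [derivedTerms] at hH
    rcases hH with h | h
    · exact (ihP h).trans (by simp [derivedTerms, Finset.subset_union_left])
    · exact (ihQ h).trans (by simp [derivedTerms, Finset.subset_union_right])
  | comp P Q ihP ihQ =>
    simp [derivedTerms] at hH
    rcases hH with ⟨K, hK, rfl⟩ | h
    · intro x hx
      rw [mul_eq_comp'] at hx
      simp [derivedTerms] at hx ⊢
      rcases hx with ⟨L, hL, rfl⟩ | h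
      · exact Or.inl ⟨L, ihP hK hL, rfl⟩
      · exact Or.inr h
    · exact (ihQ h).trans (by simp [derivedTerms, Finset.subset_union_right])
  | star P ihP =>
    simp [derivedTerms] at hH
    rcases hH with ⟨K, hK, rfl⟩
    intro x hx
    rw [mul_eq_comp'] at hx
    simp [derivedTerms] at hx ⊢
    rcases hx with ⟨L, hL, rfl⟩ | ⟨L, hL, rfl⟩
    · exact ⟨L, ihP hK hL, rfl⟩
    · exact ⟨L, hL, rfl⟩

/-- If `H ∈ DT(F)` then `DT(H · F*) ⊆ DT(F*)`. -/
theorem derivedTerms_mul_star_subset {α : Type*} [DecidableEq α]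
    (F H : RegularExpression α) (hH : H ∈ derivedTerms F) :
    derivedTerms (H * RegularExpression.star F) ⊆
      derivedTerms (RegularExpression.star F) := by
  classical
  intro x hx
  rw [mul_eq_comp'] at hx
  simp [derivedTerms] at hx ⊢
  rcases hx with ⟨K, hK, rfl⟩ | h
  · exact ⟨K, derivedTerms_trans hH hK, rfl⟩
  · simpa [derivedTerms] using h
end

section
/- Every Antimirov partial derivative of a regular expression is one of its derived terms: for every regular expression E over α and every letter a ∈ α, ∂ₐ(E) ⊆ DT(E). -/
open RegularExpression

/-- Every Antimirov partial derivative of a regular expression is one of its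
derived terms: `∂ₐ(E) ⊆ DT(E)`. -/
theorem aderiv_subset_derivedTerms {α : Type*} [DecidableEq α]
    (E : RegularExpression α) (a : α) :
    aderiv a E ⊆ derivedTerms E := by
  classical
  induction E with
  | zero => simp [aderiv, derivedTerms]
  | epsilon => simp [aderiv, derivedTerms]
  | char b =>
      simp only [aderiv, derivedTerms]
      split <;> simp
  | plus P Q hP hQ =>
      simp only [aderiv, derivedTerms]
      exact Finset.union_subset_union hP hQ
  | comp P Q hP hQ =>
      simp only [aderiv, derivedTerms]
      split
      · exact Finset.union_subset_union (Finset.image_subset_image hP) hQ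
      · exact (Finset.image_subset_image hP).trans Finset.subset_union_left
  | star P hP =>
      simp only [aderiv, derivedTerms]
      exact Finset.image_subset_image hP
end

section
/- Antimirov derivation computes the left quotient of the denoted language: for every regular expression E over α and every letter a ∈ α, the union of the languages of the partial derivatives equals the left quotient of matches E by a, that is, ⋃_{H ∈ ∂ₐ(E)} matches H = { w : List α | a :: w ∈ matches E }. -/
/-!
The left quotient by a letter `a` is additive, obeys a Leibniz rule on products
`a⁻¹(L·M) = (a⁻¹L)·M ∪ [ε ∈ L] a⁻¹M`, and sends `L∗` to `(a⁻¹L)·L∗`. These are exactly the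
clauses defining `∂ₐ`, so the union of the languages of `∂ₐ(E)` is `a⁻¹ matches E` by
induction on `E`.
-/

open RegularExpression

namespace Language

open scoped Computability

variable {α : Type*} {a b : α} {l m : Language α} {w : List α}

@[simp]
theorem leftQuotient_zero : (0 : Language α).leftQuotient [a] = 0 :=
  rfl

@[simp]
theorem leftQuotient_one : (1 : Language α).leftQuotient [a] = 0 := by
  ext w
  simp [mem_one, notMem_zero]

theorem leftQuotient_singleton_self : ({[a]} : Language α).leftQuotient [a] = 1 := by
  ext w
  change a :: w = [a] ↔ w = []
  simp

theorem leftQuotient_singleton_of_ne (h : b ≠ a) : ({[b]} : Language α).leftQuotient [a] = 0 := by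
  ext w
  change a :: w = [b] ↔ False
  simp [h.symm]

theorem leftQuotient_add : (l + m).leftQuotient [a] = l.leftQuotient [a] + m.leftQuotient [a] :=
  rfl

theorem cons_mem_mul_iff :
    a :: w ∈ l * m ↔ w ∈ l.leftQuotient [a] * m ∨ [] ∈ l ∧ a :: w ∈ m := by
  simp only [mem_mul, mem_leftQuotient, List.singleton_append]
  constructor
  · rintro ⟨_ | ⟨b, u⟩, hu, v, hv, huv⟩
    · exact .inr ⟨hu, huv ▸ hv⟩
    · obtain ⟨rfl, rfl⟩ := List.cons_eq_cons.mp huv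
      exact .inl ⟨u, hu, v, hv, rfl⟩
  · rintro (⟨u, hu, v, hv, rfl⟩ | ⟨hnil, hm⟩)
    · exact ⟨a :: u, hu, v, hv, rfl⟩
    · exact ⟨[], hnil, a :: w, hm, rfl⟩

theorem leftQuotient_mul_of_nil_mem (h : [] ∈ l) :
    (l * m).leftQuotient [a] = l.leftQuotient [a] * m + m.leftQuotient [a] := by
  ext w
  simp only [mem_leftQuotient, List.singleton_append, cons_mem_mul_iff, mem_add, h, true_and]

theorem leftQuotient_mul_of_nil_notMem (h : [] ∉ l) :
    (l * m).leftQuotient [a] = l.leftQuotient [a] * m := by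
  ext w
  simp only [mem_leftQuotient, List.singleton_append, cons_mem_mul_iff, h, false_and, or_false]

theorem cons_mem_kstar_iff : a :: w ∈ l∗ ↔ w ∈ l.leftQuotient [a] * l∗ := by
  constructor
  · intro h
    -- in a factorization into nonempty words, the letter `a` lies in the first factor
    obtain ⟨_ | ⟨_ | ⟨b, u⟩, S⟩, hw, hS⟩ := mem_kstar_iff_exists_nonempty.mp h
    · simp at hw
    · exact absurd rfl (hS [] List.mem_cons_self).2
    · obtain ⟨rfl, rfl⟩ := List.cons_eq_cons.mp hw
      exact ⟨u, (hS _ List.mem_cons_self).1, S.flatten,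
        join_mem_kstar fun y hy => (hS y (List.mem_cons_of_mem _ hy)).1, rfl⟩
  · rintro ⟨u, hu, v, hv, rfl⟩
    exact (mul_kstar_le_kstar : l * l∗ ≤ l∗) (append_mem_mul (a := a :: u) hu hv)

theorem leftQuotient_kstar : l∗.leftQuotient [a] = l.leftQuotient [a] * l∗ := by
  ext w
  rw [mem_leftQuotient, List.singleton_append, cons_mem_kstar_iff]

end Language

namespace RegularExpression

variable {α : Type*}

def matchesUnion (s : Finset (RegularExpression α)) : Language α :=
  ⨆ H ∈ s, H.matches'

@[simp]
theorem matchesUnion_empty : matchesUnion (∅ : Finset (RegularExpression α)) = 0 :=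
  iSup₂_eq_bot.mpr fun _ h => absurd h (Finset.notMem_empty _)

@[simp]
theorem matchesUnion_singleton (H : RegularExpression α) : matchesUnion {H} = H.matches' := by
  simp [matchesUnion]

theorem matchesUnion_union [DecidableEq (RegularExpression α)] (s t : Finset (RegularExpression α)) :
    matchesUnion (s ∪ t) = matchesUnion s + matchesUnion t :=
  Finset.iSup_union

theorem matchesUnion_image_mul_right [DecidableEq (RegularExpression α)]
    (s : Finset (RegularExpression α)) (Q : RegularExpression α) :
    matchesUnion (s.image (· * Q)) = matchesUnion s * Q.matches' := by
  simp only [matchesUnion, Finset.iSup_finset_image, matches'_mul, Language.iSup_mul]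

theorem matchesUnion_aderiv (a : α) (E : RegularExpression α) :
    matchesUnion (aderiv a E) = E.matches'.leftQuotient [a] := by
  classical
  induction E with
  | zero => simp [aderiv]
  | epsilon => simp [aderiv]
  | char b =>
    by_cases h : b = a
    · subst h
      simp only [aderiv, if_pos, matchesUnion_singleton, matches'_epsilon, matches'_char,
        Language.leftQuotient_singleton_self]
    · simp only [aderiv, h, if_false, matchesUnion_empty, matches'_char,
        Language.leftQuotient_singleton_of_ne h]
  | plus P Q ihP ihQ =>
    rw [aderiv, matchesUnion_union, ihP, ihQ, plus_def, matches'_add, Language.leftQuotient_add]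
  | comp P Q ihP ihQ =>
    by_cases h : [] ∈ P.matches'
    · rw [aderiv, if_pos h, matchesUnion_union, matchesUnion_image_mul_right, ihP, ihQ,
        comp_def, matches'_mul, Language.leftQuotient_mul_of_nil_mem h]
    · rw [aderiv, if_neg h, matchesUnion_image_mul_right, ihP, comp_def, matches'_mul,
        Language.leftQuotient_mul_of_nil_notMem h]
  | star P ihP =>
    rw [aderiv, matchesUnion_image_mul_right, ihP, matches'_star, Language.leftQuotient_kstar]

end RegularExpression

theorem aderiv_matches_eq_leftQuotient_general {α : Type*}
    (E : RegularExpression α) (a : α) :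
    (⋃ H ∈ aderiv a E, (H.matches' : Set (List α))) =
      { w : List α | a :: w ∈ E.matches' } :=
  matchesUnion_aderiv a E

/-- Antimirov derivation computes the left quotient of the denoted language:
`⋃_{H ∈ ∂ₐ(E)} matches H = { w | a :: w ∈ matches E }`. -/
theorem aderiv_matches_eq_leftQuotient {α : Type*} [DecidableEq α]
    (E : RegularExpression α) (a : α) :
    (⋃ H ∈ aderiv a E, (H.matches' : Set (List α))) =
      { w : List α | a :: w ∈ E.matches' } :=
  aderiv_matches_eq_leftQuotient_general E a
end

section
/- First-order development of a regular expression (Boolean case of the paper's Proposition on the differential): for every regular expression E over α and every word u : List α, one has u ∈ matches E if and only if either (u = [] and E is nullable), or there exist a letter a ∈ α, a word w, and a regular expression H with u = a :: w, H ∈ ∂ₐ(E), and w ∈ matches H. -/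
open RegularExpression

theorem cons_mem_matches_iff_aderiv {α : Type*} [DecidableEq α]
    (E : RegularExpression α) (a : α) (w : List α) :
    a :: w ∈ E.matches' ↔ ∃ H ∈ aderiv a E, w ∈ H.matches' := by
  classical
  induction E generalizing w with
  | zero => simp [aderiv, matches']
  | epsilon => simp [aderiv, matches', Language.mem_one]
  | char b =>
      simp only [aderiv, matches'_char, Set.mem_singleton_iff]
      constructor
      · rintro h
        obtain ⟨rfl, rfl⟩ := h
        exact ⟨1, by simp, by simp [matches', Language.mem_one]⟩
      · rintro ⟨H, hH, hw⟩
        split_ifs at hH with hba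
        · subst hba
          simp only [Finset.mem_singleton] at hH
          subst hH
          simp only [matches'_epsilon, Language.mem_one] at hw
          simp only [hw]
          exact Set.mem_singleton _
        · simp at hH
  | plus P Q ihP ihQ =>
      simp only [matches']
      rw [Language.mem_add, ihP, ihQ]
      simp only [aderiv, Finset.mem_union]
      constructor
      · rintro (⟨H, h1, h2⟩ | ⟨H, h1, h2⟩) <;> exact ⟨H, by tauto, h2⟩
      · rintro ⟨H, h1 | h1, h2⟩
        · exact Or.inl ⟨H, h1, h2⟩
        · exact Or.inr ⟨H, h1, h2⟩
  | comp P Q ihP ihQ =>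
      simp only [matches']
      rw [Language.mem_mul]
      simp only [aderiv]
      constructor
      · rintro ⟨x, hx, y, hy, hxy⟩
        cases x with
        | nil =>
            simp only [List.nil_append] at hxy; subst hxy
            rw [ihQ] at hy
            obtain ⟨H, h1, h2⟩ := hy
            refine ⟨H, ?_, h2⟩
            rw [if_pos hx]
            exact Finset.mem_union_right _ h1
        | cons b x' =>
            have hxy' : b :: (x' ++ y) = a :: w := hxy
            simp only [List.cons.injEq] at hxy'
            obtain ⟨rfl, hw⟩ := hxy'
            obtain ⟨H, h1, h2⟩ := (ihP x').mp hx
            refine ⟨H * Q, ?_, ?_⟩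
            · split_ifs with hnull
              · exact Finset.mem_union_left _ (Finset.mem_image_of_mem _ h1)
              · exact Finset.mem_image_of_mem _ h1
            · rw [matches'_mul, Language.mem_mul]
              exact ⟨x', h2, y, hy, hw⟩
      · rintro ⟨H, hH, hw⟩
        split_ifs at hH with hnull
        · rcases Finset.mem_union.mp hH with h | h
          · obtain ⟨K, hK, rfl⟩ := Finset.mem_image.mp h
            rw [matches'_mul, Language.mem_mul] at hw
            obtain ⟨x, hx, y, hy, hxy⟩ := hw
            exact ⟨a :: x, (ihP x).mpr ⟨K, hK, hx⟩, y, hy, by simp [hxy]⟩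
          · exact ⟨[], hnull, a :: w, (ihQ w).mpr ⟨H, h, hw⟩, rfl⟩
        · obtain ⟨K, hK, rfl⟩ := Finset.mem_image.mp hH
          rw [matches'_mul, Language.mem_mul] at hw
          obtain ⟨x, hx, y, hy, hxy⟩ := hw
          exact ⟨a :: x, (ihP x).mpr ⟨K, hK, hx⟩, y, hy, by simp [hxy]⟩
  | star P ihP =>
      simp only [matches']
      simp only [aderiv]
      constructor
      · intro h
        rw [Language.mem_kstar_iff_exists_nonempty] at h
        obtain ⟨S, hS, hmem⟩ := h
        cases S with
        | nil => simp at hS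
        | cons s S' =>
            obtain ⟨hs, hne⟩ := hmem s (by simp)
            cases s with
            | nil => simp at hne
            | cons b s' =>
                simp only [List.flatten_cons, List.cons_append, List.cons.injEq] at hS
                obtain ⟨rfl, hw⟩ := hS
                obtain ⟨K, hK, hK2⟩ := (ihP s').mp hs
                refine ⟨K * P.star, Finset.mem_image_of_mem _ hK, ?_⟩
                rw [matches'_mul, matches'_star, Language.mem_mul]
                refine ⟨s', hK2, S'.flatten, Language.join_mem_kstar ?_, hw.symm⟩
                exact fun y hy => (hmem y (by simp [hy])).1
      · rintro ⟨H, hH, hw⟩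
        obtain ⟨K, hK, rfl⟩ := Finset.mem_image.mp hH
        rw [matches'_mul, matches'_star, Language.mem_mul] at hw
        obtain ⟨x, hx, y, hy, hxy⟩ := hw
        have hax : a :: x ∈ P.matches' := (ihP x).mpr ⟨K, hK, hx⟩
        rw [Language.mem_kstar_iff_exists_nonempty] at hy ⊢
        obtain ⟨T, rfl, hT⟩ := hy
        refine ⟨(a :: x) :: T, by simp [← hxy], ?_⟩
        rintro z (hz : z ∈ (a :: x) :: T)
        rcases List.mem_cons.mp hz with rfl | hz
        · exact ⟨hax, by simp⟩
        · exact hT z hz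


/-- First-order development of a regular expression: `u ∈ matches E` iff
either `u = []` and `E` is nullable, or `u = a :: w` with `w` matched by some
Antimirov partial derivative `H ∈ ∂ₐ(E)`. -/
theorem matches_iff_nullable_or_aderiv {α : Type*} [DecidableEq α]
    (E : RegularExpression α) (u : List α) :
    u ∈ E.matches' ↔
      (u = [] ∧ [] ∈ E.matches') ∨
      ∃ (a : α) (w : List α) (H : RegularExpression α),
        u = a :: w ∧ H ∈ aderiv a E ∧ w ∈ H.matches' := by
  cases u with
  | nil => simp
  | cons a w =>
      rw [cons_mem_matches_iff_aderiv]
      simp only [List.cons_ne_nil, false_and, false_or, List.cons.injEq]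
      constructor
      · rintro ⟨H, h1, h2⟩; exact ⟨a, w, H, ⟨rfl, rfl⟩, h1, h2⟩
      · rintro ⟨a', w', H, ⟨rfl, rfl⟩, h1, h2⟩
        exact ⟨H, h1, h2⟩
end

section
/- The Antimirov automaton accepts the denoted language: for every regular expression E over α, the NFA M with state type `RegularExpression α`, transition function M.step q a = ∂ₐ(q), set of initial states M.start = {E}, and accepting states M.accept = { q | q is nullable }, satisfies M.accepts = matches E. -/
open RegularExpression

/-!
The state `q` of the Antimirov automaton is meant to accept `matches' q`, and these languages
solve the equations characterising acceptance: `[] ∈ matches' q` iff `q` is accepting, and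
`a :: w ∈ matches' q` iff `w ∈ matches' K` for some `K ∈ ∂ₐ(q)`. The second equation is
Antimirov's theorem that the partial derivatives `∂ₐ(q)` jointly denote the Brzozowski
derivative of `q`. Any family of languages solving these equations is, by induction on the
word, the family of languages accepted from the states.
-/

theorem NFA.mem_acceptsFrom_iff_of_nil_mem_of_cons_mem {α σ : Type*} (M : NFA α σ)
    (L : σ → Language α)
    (nil_mem : ∀ q, [] ∈ L q ↔ q ∈ M.accept)
    (cons_mem : ∀ q a w, a :: w ∈ L q ↔ ∃ q' ∈ M.step q a, w ∈ L q')
    (S : Set σ) (w : List α) :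
    w ∈ M.acceptsFrom S ↔ ∃ q ∈ S, w ∈ L q := by
  induction w generalizing S with
  | nil => simp only [NFA.nil_mem_acceptsFrom, nil_mem]
  | cons a w ih =>
    simp only [NFA.cons_mem_acceptsFrom, ih, NFA.mem_stepSet, cons_mem]
    exact ⟨fun ⟨q', ⟨q, hq, hstep⟩, hw⟩ => ⟨q, hq, q', hstep, hw⟩,
      fun ⟨q, hq, q', hstep, hw⟩ => ⟨q', ⟨q, hq, hstep⟩, hw⟩⟩

namespace RegularExpression

variable {α : Type*}

theorem cons_mem_matches'_iff_mem_deriv [DecidableEq α] (P : RegularExpression α) (a : α)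
    (w : List α) : a :: w ∈ P.matches' ↔ w ∈ (P.deriv a).matches' := by
  rw [← rmatch_iff_matches', ← rmatch_iff_matches']
  rfl

open scoped Classical in
theorem iSup_matches'_image_mul (s : Finset (RegularExpression α)) (R : RegularExpression α) :
    ⨆ K ∈ s.image (· * R), K.matches' = (⨆ K ∈ s, K.matches') * R.matches' := by
  simp only [Finset.iSup_finset_image, matches'_mul, Language.iSup_mul]

open scoped Classical in
theorem iSup_matches'_aderiv [DecidableEq α] (a : α) (P : RegularExpression α) :
    ⨆ K ∈ aderiv a P, K.matches' = (P.deriv a).matches' := by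
  have iSup_empty : ⨆ K ∈ (∅ : Finset (RegularExpression α)), K.matches' = 0 := by
    simp only [Finset.notMem_empty, iSup_false, iSup_bot]; rfl
  induction P with
  | zero => rw [aderiv, iSup_empty, zero_def, deriv_zero, matches'_zero]
  | epsilon => rw [aderiv, iSup_empty, one_def, deriv_one, matches'_zero]
  | char b =>
    obtain rfl | hb := eq_or_ne b a
    · simp [aderiv]
    · rw [aderiv, if_neg hb, iSup_empty, deriv_char_of_ne hb, matches'_zero]
  | plus P Q ihP ihQ =>
    rw [aderiv, Finset.iSup_union, ihP, ihQ, plus_def, deriv_add, matches'_add, add_eq_sup]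
  | comp P Q ihP ihQ =>
    have matchEpsilon_iff : P.matchEpsilon ↔ [] ∈ P.matches' := P.rmatch_iff_matches' []
    by_cases hP : [] ∈ P.matches'
    · rw [aderiv, if_pos hP, Finset.iSup_union, iSup_matches'_image_mul, ihP, ihQ, comp_def]
      simp [deriv, matchEpsilon_iff.2 hP, matches'_add, add_eq_sup]
    · rw [aderiv, if_neg hP, iSup_matches'_image_mul, ihP, comp_def]
      simp [deriv, matchEpsilon_iff, hP, matches'_mul]
  | star P ihP =>
    rw [aderiv, iSup_matches'_image_mul, ihP, deriv_star, matches'_mul]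

theorem cons_mem_matches'_iff_exists_aderiv (P : RegularExpression α) (a : α) (w : List α) :
    a :: w ∈ P.matches' ↔ ∃ K ∈ aderiv a P, w ∈ K.matches' := by
  classical
  rw [cons_mem_matches'_iff_mem_deriv, ← iSup_matches'_aderiv]
  simp only [Language.mem_iSup, exists_prop]

end RegularExpression

theorem antimirov_nfa_accepts_general {α : Type*}
    (E : RegularExpression α) :
    (⟨fun q a => ↑(aderiv a q), {E}, { q | [] ∈ q.matches' }⟩ :
        NFA α (RegularExpression α)).accepts = E.matches' := by
  ext w
  rw [NFA.accepts_eq_acceptsFrom_start, NFA.mem_acceptsFrom_iff_of_nil_mem_of_cons_mem _ matches'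
    (fun _ => Iff.rfl) (fun q a w => q.cons_mem_matches'_iff_exists_aderiv a w)]
  simp

/-- The Antimirov automaton accepts the denoted language: the NFA with states
the regular expressions, transitions `∂ₐ`, initial state `E` and accepting
states the nullable expressions accepts exactly `matches E`. -/
theorem antimirov_nfa_accepts {α : Type*} [DecidableEq α]
    (E : RegularExpression α) :
    (⟨fun q a => ↑(aderiv a q), {E}, { q | [] ∈ q.matches' }⟩ :
        NFA α (RegularExpression α)).accepts = E.matches' :=
  antimirov_nfa_accepts_general E
end

section
/- The state set of the derived-term automaton is closed under Antimirov derivation: for every regular expression E over α, every letter a ∈ α, and every K ∈ {E} ∪ DT(E), one has ∂ₐ(K) ⊆ DT(E). -/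
open RegularExpression

open scoped Classical in
/-- The state set of the derived-term automaton is closed under Antimirov
derivation: for `K ∈ {E} ∪ DT(E)`, `∂ₐ(K) ⊆ DT(E)`. -/
theorem aderiv_subset_of_mem_insert_derivedTerms {α : Type*} [DecidableEq α]
    (E : RegularExpression α) (a : α) :
    ∀ K ∈ insert E (derivedTerms E), aderiv a K ⊆ derivedTerms E := by

  induction E with
  | zero =>
    intro K hK
    simp [derivedTerms] at hK
    subst hK; simp [aderiv]
  | epsilon =>
    intro K hK
    simp [derivedTerms] at hK
    subst hK; simp [aderiv]
  | char b =>
    intro K hK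
    simp [derivedTerms] at hK
    rcases hK with h | h <;> subst h
    · simp only [aderiv, derivedTerms]
      split <;> simp
    · simp only [aderiv]
      -- K = 1 = epsilon
      exact Finset.empty_subset _
  | plus P Q ihP ihQ =>
    intro K hK
    simp only [derivedTerms, Finset.mem_insert, Finset.mem_union] at hK
    rcases hK with h | h | h
    · subst h
      simp only [aderiv, derivedTerms]
      exact Finset.union_subset_union (ihP P (Finset.mem_insert_self _ _))
        (ihQ Q (Finset.mem_insert_self _ _))
    · exact (ihP K (Finset.mem_insert_of_mem h)).trans
        (by simp only [derivedTerms]; exact Finset.subset_union_left)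
    · exact (ihQ K (Finset.mem_insert_of_mem h)).trans
        (by simp only [derivedTerms]; exact Finset.subset_union_right)
  | comp P Q ihP ihQ =>
    have himg : ∀ K, K ∈ insert P (derivedTerms P) →
        (aderiv a K).image (fun L => L * Q) ⊆ derivedTerms (comp P Q) := by
      intro K hK
      refine (Finset.image_subset_image (ihP K hK)).trans ?_
      simp only [derivedTerms]
      exact Finset.subset_union_left
    have hQ : ∀ K, K ∈ insert Q (derivedTerms Q) →
        aderiv a K ⊆ derivedTerms (comp P Q) := by
      intro K hK
      refine (ihQ K hK).trans ?_
      simp only [derivedTerms]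
      exact Finset.subset_union_right
    intro K hK
    simp only [derivedTerms, Finset.mem_insert, Finset.mem_union,
      Finset.mem_image] at hK
    rcases hK with h | ⟨L, hL, h⟩ | h
    · subst h
      simp only [aderiv]
      split
      · exact Finset.union_subset (himg P (Finset.mem_insert_self _ _))
          (hQ Q (Finset.mem_insert_self _ _))
      · exact himg P (Finset.mem_insert_self _ _)
    · subst h
      show aderiv a (comp L Q) ⊆ _
      simp only [aderiv]
      split
      · exact Finset.union_subset (himg L (Finset.mem_insert_of_mem hL))
          (hQ Q (Finset.mem_insert_self _ _))
      · exact himg L (Finset.mem_insert_of_mem hL)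
    · exact hQ K (Finset.mem_insert_of_mem h)
  | star P ihP =>
    have himg : ∀ K, K ∈ insert P (derivedTerms P) →
        (aderiv a K).image (fun L => L * RegularExpression.star P) ⊆
          derivedTerms (RegularExpression.star P) := by
      intro K hK
      refine (Finset.image_subset_image (ihP K hK)).trans ?_
      simp only [derivedTerms]
      exact Finset.Subset.rfl
    intro K hK
    simp only [derivedTerms, Finset.mem_insert, Finset.mem_image] at hK
    rcases hK with h | ⟨L, hL, h⟩
    · subst h
      simp only [aderiv]
      exact himg P (Finset.mem_insert_self _ _)
    · subst h
      show aderiv a (comp L (RegularExpression.star P)) ⊆ _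
      simp only [aderiv]
      split
      · exact Finset.union_subset (himg L (Finset.mem_insert_of_mem hL))
          (himg P (Finset.mem_insert_self _ _))
      · exact himg L (Finset.mem_insert_of_mem hL)
end

section
/- The derived-term automaton (Boolean case of the paper's main theorem): for every regular expression E over α, the NFA whose state type is the subtype { K : RegularExpression α // K ∈ {E} ∪ DT(E) }, whose transition from a state K on letter a is the set of states whose underlying expression lies in ∂ₐ(K) (well defined since ∂ₐ(K) ⊆ DT(E) for K ∈ {E} ∪ DT(E)), whose unique initial state is E, and whose accepting states are the nullable ones, is a finite automaton with at most ℓ(E) + 1 states accepting exactly the language matches E. -/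
open RegularExpression

/-! The Antimirov derivatives split off the first letter, `a :: w ∈ ⟦P⟧ ↔ ∃ K ∈ ∂ₐ(P), w ∈ ⟦K⟧`,
and accepting states are exactly those whose language contains `[]`; so `K ↦ ⟦K⟧` solves the
residual equations of the automaton, and any such solution is the family of languages accepted
from the states. The transitions stay inside the state set because `∂ₐ(K) ⊆ DT(E)` for every
`K ∈ {E} ∪ DT(E)`, and `|DT(E)| ≤ ℓ(E)` because each letter contributes the single term `1`. -/

namespace NFA

variable {α σ : Type*} {M : NFA α σ}

theorem mem_acceptsFrom_iff_of_stateLanguage (L : σ → Language α)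
    (nil_mem : ∀ q, [] ∈ L q ↔ q ∈ M.accept)
    (cons_mem : ∀ q a x, a :: x ∈ L q ↔ ∃ p ∈ M.step q a, x ∈ L p) :
    ∀ (x : List α) (S : Set σ), x ∈ M.acceptsFrom S ↔ ∃ q ∈ S, x ∈ L q
  | [], S => by simp [nil_mem]
  | a :: x, S => by
    simp only [cons_mem_acceptsFrom, mem_acceptsFrom_iff_of_stateLanguage L nil_mem cons_mem x,
      mem_stepSet, cons_mem]
    aesop

theorem accepts_eq_of_stateLanguage (L : σ → Language α)
    (nil_mem : ∀ q, [] ∈ L q ↔ q ∈ M.accept)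
    (cons_mem : ∀ q a x, a :: x ∈ L q ↔ ∃ p ∈ M.step q a, x ∈ L p)
    (q₀ : σ) (start_eq : M.start = {q₀}) : M.accepts = L q₀ := by
  ext x
  simp [accepts_eq_acceptsFrom_start, mem_acceptsFrom_iff_of_stateLanguage L nil_mem cons_mem,
    start_eq]

end NFA

theorem Language.cons_mem_mul_iff_s13 {α : Type*} {l m : Language α} {a : α} {w : List α} :
    a :: w ∈ l * m ↔ (∃ u v, a :: u ∈ l ∧ v ∈ m ∧ w = u ++ v) ∨ ([] ∈ l ∧ a :: w ∈ m) := by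
  simp only [mem_mul]
  constructor
  · rintro ⟨_ | ⟨b, u⟩, hu, v, hv, huv⟩
    · exact Or.inr ⟨hu, huv ▸ hv⟩
    · simp only [List.cons_append, List.cons.injEq] at huv
      obtain ⟨rfl, rfl⟩ := huv
      exact Or.inl ⟨u, v, hu, hv, rfl⟩
  · rintro (⟨u, v, hu, hv, rfl⟩ | ⟨hnil, hw⟩)
    · exact ⟨a :: u, hu, v, hv, rfl⟩
    · exact ⟨[], hnil, a :: w, hw, rfl⟩

open scoped Computability in
theorem Language.cons_mem_kstar_iff_s13 {α : Type*} {l : Language α} {a : α} {w : List α} :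
    a :: w ∈ l∗ ↔ ∃ u v, a :: u ∈ l ∧ v ∈ l∗ ∧ w = u ++ v := by
  constructor
  · rw [mem_kstar_iff_exists_nonempty]
    rintro ⟨_ | ⟨_ | ⟨b, u⟩, S⟩, hw, hS⟩
    · simp at hw
    · exact absurd rfl (hS _ List.mem_cons_self).2
    · simp only [List.flatten_cons, List.cons_append, List.cons.injEq] at hw
      obtain ⟨rfl, rfl⟩ := hw
      exact ⟨u, S.flatten, (hS _ List.mem_cons_self).1,
        join_mem_kstar fun y hy => (hS y (List.mem_cons_of_mem _ hy)).1, rfl⟩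
  · rintro ⟨u, v, hu, hv, rfl⟩
    rw [← one_add_self_mul_kstar_eq_kstar]
    exact Or.inr (append_mem_mul hu hv)

namespace RegularExpression

open scoped Classical
open Finset

variable {α : Type*}

theorem exists_mem_image_mul_iff (S : Finset (RegularExpression α)) (Q : RegularExpression α)
    (w : List α) :
    (∃ K ∈ S.image (· * Q), w ∈ K.matches') ↔
      ∃ u v, (∃ K ∈ S, u ∈ K.matches') ∧ v ∈ Q.matches' ∧ w = u ++ v := by
  simp only [Finset.exists_mem_image, matches'_mul, Language.mem_mul]
  grind

theorem cons_mem_matches'_iff (a : α) (w : List α) (P : RegularExpression α) :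
    a :: w ∈ P.matches' ↔ ∃ K ∈ aderiv a P, w ∈ K.matches' := by
  induction P generalizing w with
  | zero | epsilon => simp [aderiv, matches']
  | char b =>
    change a :: w = [b] ↔ _
    by_cases h : b = a
    · simp [aderiv, h]
    · simp [aderiv, h, Ne.symm h]
  | plus P Q ihP ihQ =>
    simp [aderiv, matches', Language.mem_add, ihP, ihQ, or_and_right, exists_or]
  | comp P Q ihP ihQ =>
    rw [comp_def, matches'_mul, Language.cons_mem_mul_iff_s13]
    simp only [ihP, ihQ, ← exists_mem_image_mul_iff]
    by_cases hP : [] ∈ P.matches'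
    · simp [aderiv, hP, or_and_right, exists_or]
    · simp [aderiv, hP]
  | star P ih =>
    rw [matches'_star, Language.cons_mem_kstar_iff_s13, aderiv, exists_mem_image_mul_iff,
      matches'_star]
    simp only [ih]

theorem aderiv_mul_subset (a : α) (K Q : RegularExpression α) :
    aderiv a (K * Q) ⊆ (aderiv a K).image (· * Q) ∪ aderiv a Q := by
  simp only [aderiv]
  split_ifs
  exacts [subset_rfl, subset_union_left]

theorem aderiv_subset_derivedTerms (a : α) (E : RegularExpression α) :
    aderiv a E ⊆ derivedTerms E := by
  induction E with
  | zero | epsilon => simp [aderiv]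
  | char b => by_cases h : b = a <;> simp [aderiv, derivedTerms, h]
  | plus P Q ihP ihQ => exact union_subset_union ihP ihQ
  | comp P Q ihP ihQ =>
    exact (aderiv_mul_subset a P Q).trans (union_subset_union (image_subset_image ihP) ihQ)
  | star P ih => exact image_subset_image ih

theorem aderiv_subset_derivedTerms_of_mem (a : α) {K E : RegularExpression α}
    (hK : K ∈ derivedTerms E) : aderiv a K ⊆ derivedTerms E := by
  induction E generalizing K with
  | zero | epsilon => simp [derivedTerms] at hK
  | char b =>
    obtain rfl : K = 1 := by simpa [derivedTerms] using hK
    simp [aderiv]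
  | plus P Q ihP ihQ =>
    rcases mem_union.1 hK with hK | hK
    · exact (ihP hK).trans subset_union_left
    · exact (ihQ hK).trans subset_union_right
  | comp P Q ihP ihQ =>
    rcases mem_union.1 hK with hK | hK
    · obtain ⟨L, hL, rfl⟩ := mem_image.1 hK
      exact (aderiv_mul_subset a L Q).trans
        (union_subset_union (image_subset_image (ihP hL)) (aderiv_subset_derivedTerms a Q))
    · exact (ihQ hK).trans subset_union_right
  | star P ih =>
    obtain ⟨L, hL, rfl⟩ := mem_image.1 hK
    exact (aderiv_mul_subset a L P.star).trans <| union_subset (image_subset_image (ih hL))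
      (image_subset_image (aderiv_subset_derivedTerms a P))

theorem card_derivedTerms_le (E : RegularExpression α) : #(derivedTerms E) ≤ litLength E := by
  induction E with
  | zero | epsilon => simp [derivedTerms, litLength]
  | char b => simp [derivedTerms, litLength]
  | plus P Q ihP ihQ => exact (card_union_le _ _).trans (add_le_add ihP ihQ)
  | comp P Q ihP ihQ =>
    exact (card_union_le _ _).trans (add_le_add (card_image_le.trans ihP) ihQ)
  | star P ih => exact card_image_le.trans ih

end RegularExpression

open scoped Classical in
theorem derivedTerm_nfa_general {α : Type*}
    (E : RegularExpression α) :
    (⟨fun (q : {K : RegularExpression α // K ∈ insert E (derivedTerms E)}) a =>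
        { p | p.1 ∈ aderiv a q.1 },
      {⟨E, Finset.mem_insert_self E (derivedTerms E)⟩},
      { q | [] ∈ q.1.matches' }⟩ :
        NFA α {K : RegularExpression α // K ∈ insert E (derivedTerms E)}).accepts
      = E.matches' ∧
    Fintype.card {K : RegularExpression α // K ∈ insert E (derivedTerms E)} ≤
      litLength E + 1 := by
  set S := insert E (derivedTerms E)
  have aderiv_subset {K : RegularExpression α} (hK : K ∈ S) (a : α) :
      aderiv a K ⊆ derivedTerms E := by
    rcases Finset.mem_insert.1 hK with rfl | hK
    exacts [aderiv_subset_derivedTerms a K, aderiv_subset_derivedTerms_of_mem a hK]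
  constructor
  · refine NFA.accepts_eq_of_stateLanguage (fun q : S => q.1.matches') (fun _ => Iff.rfl) ?_
      ⟨E, Finset.mem_insert_self E _⟩ rfl
    rintro ⟨K, hK⟩ a w
    rw [cons_mem_matches'_iff]
    constructor
    · rintro ⟨L, hL, hw⟩
      exact ⟨⟨L, Finset.mem_insert_of_mem (aderiv_subset hK a hL)⟩, hL, hw⟩
    · rintro ⟨p, hp, hw⟩
      exact ⟨p.1, hp, hw⟩
  · rw [Fintype.card_coe]
    exact (Finset.card_insert_le _ _).trans (Nat.add_le_add_right (card_derivedTerms_le E) 1)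

open scoped Classical in
/-- The derived-term automaton: the NFA with state set `{E} ∪ DT(E)`,
transitions given by Antimirov derivation, initial state `E` and accepting
states the nullable expressions, has at most `ℓ(E) + 1` states and accepts
exactly the language `matches E`. -/
theorem derivedTerm_nfa {α : Type*} [DecidableEq α]
    (E : RegularExpression α) :
    (⟨fun (q : {K : RegularExpression α // K ∈ insert E (derivedTerms E)}) a =>
        { p | p.1 ∈ aderiv a q.1 },
      {⟨E, Finset.mem_insert_self E (derivedTerms E)⟩},
      { q | [] ∈ q.1.matches' }⟩ :
        NFA α {K : RegularExpression α // K ∈ insert E (derivedTerms E)}).accepts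
      = E.matches' ∧
    Fintype.card {K : RegularExpression α // K ∈ insert E (derivedTerms E)} ≤
      litLength E + 1 :=
  derivedTerm_nfa_general E
end

section
/- Morphisms of standard automata are compatible with the product construction: let K be a semiring, P, P', Q, Q' finite types, and suppose given row vectors J : 1×P, J' : 1×P', Kr : 1×Q, K' : 1×Q', square matrices F : P×P, F' : P'×P', G : Q×Q, G' : Q'×Q', column vectors U : P×1, U' : P'×1, V : Q×1, V' : Q'×1, scalars x, y ∈ K, and transfer matrices X : P×P', Y : Q×Q' satisfying J·X = J', F·X = X·F', U = X·U', Kr·Y = K', G·Y = Y·G', and V = Y·V'. Then: (i) Matrix.fromBlocks F (U·Kr) 0 G · Matrix.fromBlocks X 0 0 Y = Matrix.fromBlocks X 0 0 Y · Matrix.fromBlocks F' (U'·K') 0 G'; (ii) the row vector with blocks (J, x • Kr) multiplied by Matrix.fromBlocks X 0 0 Y equals the row vector with blocks (J', x • K'); and (iii) the column vector with blocks (U·y, V) equals Matrix.fromBlocks X 0 0 Y multiplied by the column vector with blocks (U'·y, V'). Hence the product of the standard automata is conjugate to the product of their images. -/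
namespace Matrix

variable {R : Type*} [Semiring R] {l m n m' n' : Type*}

theorem fromCols_mul_fromBlocks_diag [Fintype m] [Fintype n]
    (A : Matrix l m R) (B : Matrix l n R) (X : Matrix m m' R) (Y : Matrix n n' R) :
    fromCols A B * fromBlocks X 0 0 Y = fromCols (A * X) (B * Y) := by
  simp [fromCols_mul_fromBlocks]

theorem fromBlocks_diag_mul_fromRows [Fintype m'] [Fintype n']
    (X : Matrix m m' R) (Y : Matrix n n' R) (A : Matrix m' l R) (B : Matrix n' l R) :
    fromBlocks X 0 0 Y * fromRows A B = fromRows (X * A) (Y * B) := by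
  simp [fromBlocks_mul_fromRows]

theorem fromBlocks_mul_fromBlocks_diag_comm [Fintype m] [Fintype n] [Fintype m'] [Fintype n']
    {A : Matrix m m R} {B : Matrix m n R} {D : Matrix n n R}
    {A' : Matrix m' m' R} {B' : Matrix m' n' R} {D' : Matrix n' n' R}
    {X : Matrix m m' R} {Y : Matrix n n' R}
    (hA : A * X = X * A') (hB : B * Y = X * B') (hD : D * Y = Y * D') :
    fromBlocks A B 0 D * fromBlocks X 0 0 Y = fromBlocks X 0 0 Y * fromBlocks A' B' 0 D' := by
  simp [fromBlocks_multiply, hA, hB, hD]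

end Matrix

/-- Morphisms of standard automata are compatible with the product
construction: given morphisms (conjugacies) `X : (J,F,U) → (J',F',U')` and
`Y : (Kr,G,V) → (K',G',V')` of the cores of two standard automata, the block
data of the product automaton is conjugate by `fromBlocks X 0 0 Y` to the
block data of the product of the images. -/
theorem product_standard_automata_morphism
    {K : Type*} [Semiring K] {P P' Q Q' : Type*}
    [Fintype P] [Fintype P'] [Fintype Q] [Fintype Q']
    (J : Matrix Unit P K) (J' : Matrix Unit P' K)
    (Kr : Matrix Unit Q K) (K' : Matrix Unit Q' K)
    (F : Matrix P P K) (F' : Matrix P' P' K)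
    (G : Matrix Q Q K) (G' : Matrix Q' Q' K)
    (U : Matrix P Unit K) (U' : Matrix P' Unit K)
    (V : Matrix Q Unit K) (V' : Matrix Q' Unit K)
    (x y : K)
    (X : Matrix P P' K) (Y : Matrix Q Q' K)
    (hJ : J * X = J') (hF : F * X = X * F') (hU : U = X * U')
    (hK : Kr * Y = K') (hG : G * Y = Y * G') (hV : V = Y * V') :
    Matrix.fromBlocks F (U * Kr) 0 G * Matrix.fromBlocks X 0 0 Y =
        Matrix.fromBlocks X 0 0 Y * Matrix.fromBlocks F' (U' * K') 0 G' ∧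
    Matrix.fromCols J (x • Kr) * Matrix.fromBlocks X 0 0 Y =
        Matrix.fromCols J' (x • K') ∧
    Matrix.fromRows (U * (y • (1 : Matrix Unit Unit K))) V =
        Matrix.fromBlocks X 0 0 Y *
          Matrix.fromRows (U' * (y • (1 : Matrix Unit Unit K))) V' := by
  have hUK : U * Kr * Y = X * (U' * K') := by
    rw [Matrix.mul_assoc, hK, hU, Matrix.mul_assoc]
  refine ⟨Matrix.fromBlocks_mul_fromBlocks_diag_comm hF hUK hG, ?_, ?_⟩
  · rw [Matrix.fromCols_mul_fromBlocks_diag, hJ, Matrix.smul_mul, hK]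
  · rw [Matrix.fromBlocks_diag_mul_fromRows, ← Matrix.mul_assoc, ← hU, ← hV]
end

section
/- Morphisms of standard automata are compatible with the star construction: let K be a semiring, P and P' finite types, J : 1×P and J' : 1×P' row vectors, F : P×P and F' : P'×P' square matrices, U : P×1 and U' : P'×1 column vectors over K, and X : P×P' a transfer matrix satisfying J·X = J', F·X = X·F', and U = X·U'. Then for every scalar h ∈ K one has (U·(h • J) + F)·X = X·(U'·(h • J') + F') and (h • J)·X = h • J'. (Taking h = c*, the star of the constant term, this says that the star of a standard automaton is conjugate, by the same transfer matrix, to the star of its morphic image.) -/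
/-- Morphisms of standard automata are compatible with the star construction:
if `J·X = J'`, `F·X = X·F'` and `U = X·U'`, then for every scalar `h`
(to be taken as `c*`, the star of the constant term) one has
`(U·(h • J) + F)·X = X·(U'·(h • J') + F')` and `(h • J)·X = h • J'`. -/
theorem star_standard_automaton_morphism
    {K : Type*} [Semiring K] {P P' : Type*} [Fintype P] [Fintype P']
    (J : Matrix Unit P K) (J' : Matrix Unit P' K)
    (F : Matrix P P K) (F' : Matrix P' P' K)
    (U : Matrix P Unit K) (U' : Matrix P' Unit K)
    (X : Matrix P P' K)
    (hJ : J * X = J') (hF : F * X = X * F') (hU : U = X * U')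
    (h : K) :
    (U * (h • J) + F) * X = X * (U' * (h • J') + F') ∧
    (h • J) * X = h • J' := by
  constructor
  · subst hU hJ
    rw [Matrix.add_mul, hF, Matrix.mul_add]
    congr 1
    rw [← Matrix.smul_mul, Matrix.mul_assoc, Matrix.mul_assoc]
  · subst hJ
    rw [Matrix.smul_mul]
end
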